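/- arXiv:1701.00205 — 8 statements merged into one kernel-verified Lean document; each statement's English description precedes it below -/
import Mathlib

section
/- Let L be a relational language and let 𝒯 be a set of complete satisfiable L-theories with pairwise disjoint languages. Then 𝒯 is E-closed (Cl_E(𝒯) = 𝒯) if and only if the following two conditions hold: (i) for every n ∈ ω∖{0}, if infinitely many theories in 𝒯 have an n-element model then T⁰_n ∈ 𝒯; (ii) if either the finite cardinalities of models of theories in 𝒯 are unbounded (for every N there is a theory in 𝒯 with a finite model of more than N elements) or infinitely many theories in 𝒯 have infinite models, then T⁰_∞ ∈ 𝒯. -/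
open FirstOrder FirstOrder.Language

universe u v

variable {L : FirstOrder.Language.{u, v}}

/-- The `E`-closure of a family of complete theories: `𝒯` together with all complete
satisfiable theories `T` such that for every sentence `φ ∈ T` the set `𝒯_φ` is infinite
(Proposition 1.1 of the paper, taken as the definition). -/
def ClE (𝒯 : Set (L.Theory)) : Set (L.Theory) :=
  𝒯 ∪ {T | T.IsMaximal ∧ ∀ φ ∈ T, {S ∈ 𝒯 | φ ∈ S}.Infinite}

/-- `T` has a model with exactly `n` elements. -/
def HasModelCard (T : L.Theory) (n : ℕ) : Prop :=
  ∃ (M : Type (max u v)) (S : L.Structure M), Nonempty M ∧ Nat.card M = n ∧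
    @FirstOrder.Language.Theory.Model L M S T

/-- `T` has a finite model, i.e. `T` is finitely categorical. -/
def HasFiniteModel (T : L.Theory) : Prop :=
  ∃ n : ℕ, 0 < n ∧ HasModelCard T n

/-- `T` has an infinite model. -/
def HasInfiniteModel (T : L.Theory) : Prop :=
  ∃ (M : Type (max u v)) (S : L.Structure M), Infinite M ∧
    @FirstOrder.Language.Theory.Model L M S T

/-- `T` is ℵ₀-categorical: it has a countably infinite model and all its countably infinite
models are isomorphic (so it has exactly one model of cardinality ℵ₀ up to isomorphism). -/
def Aleph0Categorical (T : L.Theory) : Prop :=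
  (∃ (M : Type (max u v)) (S : L.Structure M), Countable M ∧ Infinite M ∧
      @FirstOrder.Language.Theory.Model L M S T) ∧
  ∀ (M N : Type (max u v)) (SM : L.Structure M) (SN : L.Structure N),
    @FirstOrder.Language.Theory.Model L M SM T → @FirstOrder.Language.Theory.Model L N SN T →
    Countable M → Infinite M → Countable N → Infinite N →
      Nonempty (@FirstOrder.Language.Equiv L M N SM SN)

/-- The structure on `M` (over a relational language) interpreting every relation as empty. -/
def trivialStructure (L : FirstOrder.Language.{u, v}) [L.IsRelational] (M : Type*) :
    L.Structure M where
  funMap := fun f _ => isEmptyElim f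
  RelMap := fun _ _ => False

/-- `T⁰_n`: the complete theory of an `n`-element structure with all relations empty. -/
noncomputable def T0fin (L : FirstOrder.Language.{u, v}) [L.IsRelational] (n : ℕ) : L.Theory :=
  @FirstOrder.Language.completeTheory L (Fin n) (trivialStructure L (Fin n))

/-- `T⁰_∞`: the complete theory of an infinite structure with all relations empty. -/
noncomputable def T0inf (L : FirstOrder.Language.{u, v}) [L.IsRelational] : L.Theory :=
  @FirstOrder.Language.completeTheory L ℕ (trivialStructure L ℕ)

/-- The sentence `∃ x̄, R x̄` asserting nonemptiness of the relation `R`. -/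
def relNonemptySentence {n : ℕ} (R : L.Relations n) : L.Sentence :=
  (FirstOrder.Language.Relations.boundedFormula (α := Empty) (l := n) R
    fun i => FirstOrder.Language.Term.var (Sum.inr i)).exs

/-- The theories in `𝒯` have pairwise disjoint languages: no relation symbol is asserted
nonempty by two distinct theories of `𝒯`. -/
def PairwiseDisjointLanguages (𝒯 : Set (L.Theory)) : Prop :=
  ∀ T ∈ 𝒯, ∀ T' ∈ 𝒯, T ≠ T' → ∀ (n : ℕ) (R : L.Relations n),
    ¬(relNonemptySentence R ∈ T ∧ relNonemptySentence R ∈ T')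

/-! ### Auxiliary material -/

universe w w'

section Aux

set_option linter.unusedSectionVars false

variable [L.IsRelational]

lemma term_eq_var {n : ℕ} (t : L.Term (Empty ⊕ Fin n)) :
    ∃ i, t = FirstOrder.Language.Term.var (Sum.inr i) := by
  cases t with
  | var s =>
    cases s with
    | inl e => exact e.elim
    | inr i => exact ⟨i, rfl⟩
  | func f _ => exact isEmptyElim f

/-- Quantifier depth of a bounded formula. -/
def fdepth : ∀ {n : ℕ}, L.BoundedFormula Empty n → ℕ
  | _, .falsum => 0
  | _, .equal _ _ => 0
  | _, .rel _ _ => 0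
  | _, .imp f g => max (fdepth f) (fdepth g)
  | _, .all f => fdepth f + 1

/-- The set of relation symbols occurring in a bounded formula. -/
def usedRels : ∀ {n : ℕ}, L.BoundedFormula Empty n → Set (Σ k, L.Relations k)
  | _, .rel R _ => {⟨_, R⟩}
  | _, .imp f g => usedRels f ∪ usedRels g
  | _, .all f => usedRels f
  | _, _ => ∅

lemma usedRels_finite : ∀ {n : ℕ} (φ : L.BoundedFormula Empty n), (usedRels φ).Finite
  | _, .falsum => Set.finite_empty
  | _, .equal _ _ => Set.finite_empty
  | _, .rel _ _ => Set.finite_singleton _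
  | _, .imp f g => (usedRels_finite f).union (usedRels_finite g)
  | _, .all f => usedRels_finite f

/-- Realization only depends on the interpretation of the relation symbols occurring in the
formula (for relational languages). -/
lemma realize_iff_of_relMap_iff {M : Type w} (S1 S2 : L.Structure M) :
    ∀ {n : ℕ} (φ : L.BoundedFormula Empty n),
    (∀ (k : ℕ) (R : L.Relations k), (⟨k, R⟩ : Σ k, L.Relations k) ∈ usedRels φ →
      ∀ x : Fin k → M, S1.RelMap R x ↔ S2.RelMap R x) →
    ∀ (vv : Empty → M) (xs : Fin n → M),
    (@FirstOrder.Language.BoundedFormula.Realize L M S1 Empty n φ vv xs ↔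
      @FirstOrder.Language.BoundedFormula.Realize L M S2 Empty n φ vv xs)
  | _, .falsum, _, _, _ => Iff.rfl
  | _, .equal t₁ t₂, _, vv, xs => by
    obtain ⟨i, rfl⟩ := term_eq_var t₁
    obtain ⟨j, rfl⟩ := term_eq_var t₂
    exact Iff.rfl
  | k, .rel R ts, h, vv, xs => by
    have hts : ∀ i, ∃ j, ts i = FirstOrder.Language.Term.var (Sum.inr j) :=
      fun i => term_eq_var (ts i)
    choose g hg using hts
    have h1 : (fun i => @Term.realize L M S1 _ (Sum.elim vv xs) (ts i)) = fun i => xs (g i) := by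
      funext i; rw [hg i]; rfl
    have h2 : (fun i => @Term.realize L M S2 _ (Sum.elim vv xs) (ts i)) = fun i => xs (g i) := by
      funext i; rw [hg i]; rfl
    show @Structure.RelMap L M S1 _ R _ ↔ @Structure.RelMap L M S2 _ R _
    rw [h1, h2]
    exact h _ R (by simp [usedRels]) _
  | _, .imp f g, h, vv, xs => by
    have hf := realize_iff_of_relMap_iff S1 S2 f
      (fun k R hR => h k R (Set.mem_union_left _ hR)) vv xs
    have hg := realize_iff_of_relMap_iff S1 S2 g
      (fun k R hR => h k R (Set.mem_union_right _ hR)) vv xs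
    show (_ → _) ↔ (_ → _)
    rw [hf, hg]
  | _, .all f, h, vv, xs => by
    have hf := fun a => realize_iff_of_relMap_iff S1 S2 f h vv (Fin.snoc xs a)
    show (∀ _, _) ↔ (∀ _, _)
    exact forall_congr' hf

lemma exists_fresh {M : Type w} {n : ℕ} (h : ((n + 1 : ℕ) : Cardinal.{w}) ≤ Cardinal.mk M)
    (xs : Fin n → M) : ∃ x : M, ∀ i, xs i ≠ x := by
  by_contra hc
  push_neg at hc
  have hsurj : Function.Surjective xs := fun x => by obtain ⟨i, hi⟩ := hc x; exact ⟨i, hi⟩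
  have hsurj' : Function.Surjective (fun i : ULift.{w} (Fin n) => xs i.down) :=
    fun x => by obtain ⟨i, hi⟩ := hsurj x; exact ⟨⟨i⟩, hi⟩
  have := Cardinal.mk_le_of_surjective hsurj'
  simp only [Cardinal.mk_uLift, Cardinal.mk_fin, Cardinal.lift_natCast] at this
  have := h.trans this
  rw [Nat.cast_le] at this
  omega

lemma snoc_pattern {M : Type w} {N : Type w'} {n : ℕ} {xs : Fin n → M} {ys : Fin n → N}
    (hpat : ∀ i j, xs i = xs j ↔ ys i = ys j) {x : M} {y : N}
    (hxy : ∀ i, (xs i = x ↔ ys i = y)) :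
    ∀ i j : Fin (n + 1), (Fin.snoc xs x : Fin (n + 1) → M) i = (Fin.snoc xs x : Fin (n + 1) → M) j ↔
      (Fin.snoc ys y : Fin (n + 1) → N) i = (Fin.snoc ys y : Fin (n + 1) → N) j := by
  intro i j
  rcases Fin.eq_castSucc_or_eq_last i with ⟨i', rfl⟩ | rfl <;>
    rcases Fin.eq_castSucc_or_eq_last j with ⟨j', rfl⟩ | rfl <;>
    simp only [Fin.snoc_last, Fin.snoc_castSucc]
  · exact hpat i' j'
  · exact hxy i'
  · rw [eq_comm, eq_comm (a := y)]; exact hxy j'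

/-- Two trivial structures whose cardinality is at least the quantifier depth of `φ` (plus the
number of free bounded variables) realize `φ` under matching assignments in the same way. -/
lemma triv_realize_iff {M : Type w} {N : Type w'} :
    ∀ {n : ℕ} (φ : L.BoundedFormula Empty n),
    ((n + fdepth φ : ℕ) : Cardinal.{w}) ≤ Cardinal.mk M →
    ((n + fdepth φ : ℕ) : Cardinal.{w'}) ≤ Cardinal.mk N →
    ∀ (vM : Empty → M) (vN : Empty → N) (xs : Fin n → M) (ys : Fin n → N),
    (∀ i j, xs i = xs j ↔ ys i = ys j) →
    (@FirstOrder.Language.BoundedFormula.Realize L M (trivialStructure L M) Empty n φ vM xs ↔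
      @FirstOrder.Language.BoundedFormula.Realize L N (trivialStructure L N) Empty n φ vN ys)
  | _, .falsum, _, _, _, _, _, _, _ => Iff.rfl
  | _, .equal t₁ t₂, _, _, vM, vN, xs, ys, hpat => by
    obtain ⟨i, rfl⟩ := term_eq_var t₁
    obtain ⟨j, rfl⟩ := term_eq_var t₂
    exact hpat i j
  | _, .rel R ts, _, _, vM, vN, xs, ys, hpat => Iff.rfl
  | _, .imp f g, hM, hN, vM, vN, xs, ys, hpat => by
    have hMf : ((_ + fdepth f : ℕ) : Cardinal.{w}) ≤ Cardinal.mk M :=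
      le_trans (by exact_mod_cast Nat.add_le_add_left (le_max_left _ _) _) hM
    have hNf : ((_ + fdepth f : ℕ) : Cardinal.{w'}) ≤ Cardinal.mk N :=
      le_trans (by exact_mod_cast Nat.add_le_add_left (le_max_left _ _) _) hN
    have hMg : ((_ + fdepth g : ℕ) : Cardinal.{w}) ≤ Cardinal.mk M :=
      le_trans (by exact_mod_cast Nat.add_le_add_left (le_max_right _ _) _) hM
    have hNg : ((_ + fdepth g : ℕ) : Cardinal.{w'}) ≤ Cardinal.mk N :=
      le_trans (by exact_mod_cast Nat.add_le_add_left (le_max_right _ _) _) hN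
    have h1 := triv_realize_iff f hMf hNf vM vN xs ys hpat
    have h2 := triv_realize_iff g hMg hNg vM vN xs ys hpat
    show (_ → _) ↔ (_ → _)
    rw [h1, h2]
  | n, .all f, hM, hN, vM, vN, xs, ys, hpat => by
    have harith : ((n + 1) + fdepth f : ℕ) = (n + fdepth (BoundedFormula.all f) : ℕ) := by
      simp [fdepth]; omega
    have hM' : (((n + 1) + fdepth f : ℕ) : Cardinal.{w}) ≤ Cardinal.mk M := by
      rw [harith]; exact hM
    have hN' : (((n + 1) + fdepth f : ℕ) : Cardinal.{w'}) ≤ Cardinal.mk N := by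
      rw [harith]; exact hN
    have hM1 : ((n + 1 : ℕ) : Cardinal.{w}) ≤ Cardinal.mk M :=
      le_trans (by exact_mod_cast Nat.le_add_right _ _) hM'
    have hN1 : ((n + 1 : ℕ) : Cardinal.{w'}) ≤ Cardinal.mk N :=
      le_trans (by exact_mod_cast Nat.le_add_right _ _) hN'
    show (∀ _, _) ↔ (∀ _, _)
    constructor
    · intro h y
      by_cases hy : ∃ j, ys j = y
      · obtain ⟨j, rfl⟩ := hy
        exact (triv_realize_iff f hM' hN' vM vN _ _
          (snoc_pattern hpat (fun i => hpat i j))).mp (h (xs j))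
      · push_neg at hy
        obtain ⟨x, hx⟩ := exists_fresh hM1 xs
        exact (triv_realize_iff f hM' hN' vM vN _ _
          (snoc_pattern hpat (fun i => iff_of_false (hx i) (hy i)))).mp (h x)
    · intro h x
      by_cases hx : ∃ j, xs j = x
      · obtain ⟨j, rfl⟩ := hx
        exact (triv_realize_iff f hM' hN' vM vN _ _
          (snoc_pattern hpat (fun i => hpat i j))).mpr (h (ys j))
      · push_neg at hx
        obtain ⟨y, hy⟩ := exists_fresh hN1 ys
        exact (triv_realize_iff f hM' hN' vM vN _ _
          (snoc_pattern hpat (fun i => iff_of_false (hx i) (hy i)))).mpr (h y)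

/-- The sentence version of `triv_realize_iff`. -/
lemma triv_sentence_iff {M : Type w} {N : Type w'} (φ : L.Sentence)
    (hM : ((fdepth φ : ℕ) : Cardinal.{w}) ≤ Cardinal.mk M)
    (hN : ((fdepth φ : ℕ) : Cardinal.{w'}) ≤ Cardinal.mk N) :
    (@Sentence.Realize L M (trivialStructure L M) φ ↔
      @Sentence.Realize L N (trivialStructure L N) φ) :=
  triv_realize_iff φ (by simpa using hM) (by simpa using hN) _ _ _ _ (fun i => i.elim0)

/-- A bijection between carriers gives an isomorphism of trivial structures. -/
def trivEquiv {M : Type w} {N : Type w'} (e : M ≃ N) :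
    @FirstOrder.Language.Equiv L M N (trivialStructure L M) (trivialStructure L N) :=
  letI := trivialStructure L M
  letI := trivialStructure L N
  { toEquiv := e
    map_fun' := fun f _ => isEmptyElim f
    map_rel' := fun _ _ => Iff.rfl }

lemma triv_realize_sentence_iff_of_equiv {M : Type w} {N : Type w'} (e : M ≃ N)
    (φ : L.Sentence) :
    (@Sentence.Realize L M (trivialStructure L M) φ ↔
      @Sentence.Realize L N (trivialStructure L N) φ) := by
  letI := trivialStructure L M
  letI := trivialStructure L N
  exact StrongHomClass.realize_sentence (trivEquiv e) φ

lemma realize_relNonemptySentence {M : Type w} (S : L.Structure M) {n : ℕ}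
    (R : L.Relations n) :
    @Sentence.Realize L M S (relNonemptySentence R) ↔ ∃ x : Fin n → M, S.RelMap R x := by
  letI := S
  simp [relNonemptySentence, Sentence.Realize, BoundedFormula.realize_exs,
    Term.realize]

lemma mem_iff_realize {T : L.Theory} (hT : T.IsMaximal) {M : Type w} {S : L.Structure M}
    (hne : Nonempty M) (hmod : @FirstOrder.Language.Theory.Model L M S T) (φ : L.Sentence) :
    φ ∈ T ↔ @Sentence.Realize L M S φ := by
  letI := S
  haveI := hmod
  haveI := hne
  constructor
  · exact fun h => T.realize_sentence_of_mem h
  · intro h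
    rcases hT.mem_or_not_mem φ with h' | h'
    · exact h'
    · exact absurd h (by simpa using T.realize_sentence_of_mem h')

lemma realize_iff_triv_of_usedEmpty {M : Type w} (S : L.Structure M) (φ : L.Sentence)
    (h : ∀ (k : ℕ) (R : L.Relations k), (⟨k, R⟩ : Σ k, L.Relations k) ∈ usedRels φ →
      ∀ x : Fin k → M, ¬ S.RelMap R x) :
    (@Sentence.Realize L M S φ ↔ @Sentence.Realize L M (trivialStructure L M) φ) :=
  realize_iff_of_relMap_iff S _ φ (fun k R hR x => iff_of_false (h k R hR x) id) _ _

lemma mk_eq_of_natCard {M : Type w} {m : ℕ} (hm : m ≠ 0) (h : Nat.card M = m) :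
    Cardinal.mk M = m := (Cardinal.toNat_eq_iff hm).mp h

lemma natCard_eq_of_mk {M : Type w} {m : ℕ} (h : Cardinal.mk M = m) : Nat.card M = m := by
  show Cardinal.toNat (Cardinal.mk M) = m
  rw [h, Cardinal.toNat_natCast]

/-- The set of theories of `𝒯` asserting nonemptiness of some relation symbol used in `φ`
is finite (by disjointness of languages). -/
lemma bad_finite (𝒯 : Set (L.Theory)) (hdisj : PairwiseDisjointLanguages 𝒯)
    (φ : L.Sentence) :
    {S | S ∈ 𝒯 ∧ ∃ p : Σ k, L.Relations k, p ∈ usedRels φ ∧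
      relNonemptySentence p.2 ∈ S}.Finite := by
  classical
  set B := {S | S ∈ 𝒯 ∧ ∃ p : Σ k, L.Relations k, p ∈ usedRels φ ∧
      relNonemptySentence p.2 ∈ S} with hB
  have hsel : ∀ S : B, ∃ p : usedRels φ,
      relNonemptySentence (p : Σ k, L.Relations k).2 ∈ (S : L.Theory) := by
    rintro ⟨S, hS, p, hp, hmem⟩
    exact ⟨⟨p, hp⟩, hmem⟩
  choose f hf using hsel
  have hinj : Function.Injective f := by
    intro S S' h
    by_contra hne
    have hne' : (S : L.Theory) ≠ (S' : L.Theory) := fun hSS => hne (Subtype.ext hSS)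
    refine hdisj S S.2.1 S' S'.2.1 hne' (f S : Σ k, L.Relations k).1
      (f S : Σ k, L.Relations k).2 ⟨hf S, ?_⟩
    have := hf S'
    rw [← h] at this
    exact this
  haveI : Finite (usedRels φ) := (usedRels_finite φ).to_subtype
  haveI : Finite B := Finite.of_injective f hinj
  exact Set.toFinite B

/-- A maximal theory determines the (finite) cardinality of its models. -/
lemma card_unique {T : L.Theory} (hT : T.IsMaximal) {m m' : ℕ} (hm : 0 < m)
    (h : HasModelCard T m) (h' : HasModelCard T m') : m = m' := by
  obtain ⟨M, SM, hne, hcM, hmod⟩ := h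
  obtain ⟨M', SM', hne', hcM', hmod'⟩ := h'
  have hmkM : Cardinal.mk M = m := mk_eq_of_natCard (by omega) hcM
  have h1 : Sentence.cardGe L m ∈ T := by
    rw [mem_iff_realize hT hne hmod]
    letI := SM
    rw [Sentence.realize_cardGe, hmkM]
  have h2 : (Sentence.cardGe L (m + 1)).not ∈ T := by
    rcases hT.mem_or_not_mem (Sentence.cardGe L (m + 1)) with h | h
    · exfalso
      have hge := (mem_iff_realize hT hne hmod _).mp h
      letI := SM
      rw [Sentence.realize_cardGe, hmkM, Nat.cast_le] at hge
      omega
    · exact h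
  have h1' := (mem_iff_realize hT hne' hmod' _).mp h1
  have h2' := (mem_iff_realize hT hne' hmod' _).mp h2
  letI := SM'
  rw [Sentence.realize_cardGe] at h1'
  rw [Sentence.realize_not, Sentence.realize_cardGe] at h2'
  have hlt : Cardinal.mk M' < ((m + 1 : ℕ) : Cardinal) := lt_of_not_ge h2'
  obtain ⟨k, hk⟩ := Cardinal.lt_aleph0.mp (hlt.trans (Cardinal.nat_lt_aleph0 _))
  rw [hk] at h1' hlt
  have hk1 : m ≤ k := by exact_mod_cast h1'
  have hk2 : k < m + 1 := by exact_mod_cast hlt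
  have : Nat.card M' = k := natCard_eq_of_mk hk
  omega

lemma mem_T0fin_iff {n : ℕ} {φ : L.Sentence} :
    φ ∈ T0fin L n ↔ @Sentence.Realize L (Fin n) (trivialStructure L (Fin n)) φ := Iff.rfl

lemma mem_T0inf_iff {φ : L.Sentence} :
    φ ∈ T0inf L ↔ @Sentence.Realize L ℕ (trivialStructure L ℕ) φ := Iff.rfl

end Aux

/-- Proposition 2.4: a class `𝒯` of complete theories with pairwise disjoint languages is
`E`-closed iff (i) for every `n ≥ 1`, if infinitely many theories of `𝒯` have an `n`-element
model then `T⁰_n ∈ 𝒯`, and (ii) if the finite cardinalities of models of theories of `𝒯` are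
unbounded or infinitely many theories of `𝒯` have infinite models then `T⁰_∞ ∈ 𝒯`. -/
theorem prop_2_4 (L : FirstOrder.Language.{u, v}) [L.IsRelational]
    (𝒯 : Set (L.Theory)) (hmax : ∀ T ∈ 𝒯, T.IsMaximal)
    (hdisj : PairwiseDisjointLanguages 𝒯) :
    ClE 𝒯 = 𝒯 ↔
      ((∀ n : ℕ, 0 < n → {T ∈ 𝒯 | HasModelCard T n}.Infinite → T0fin L n ∈ 𝒯) ∧
       (((∀ N : ℕ, ∃ T ∈ 𝒯, ∃ n : ℕ, N < n ∧ HasModelCard T n) ∨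
           {T ∈ 𝒯 | HasInfiniteModel T}.Infinite) → T0inf L ∈ 𝒯)) := by
  classical
  have key : ∀ (φ : L.Sentence) (S : L.Theory), S ∈ 𝒯 →
      (¬ ∃ p : Σ k, L.Relations k, p ∈ usedRels φ ∧ relNonemptySentence p.2 ∈ S) →
      ∀ (M : Type (max u v)) (SM : L.Structure M), Nonempty M →
        @FirstOrder.Language.Theory.Model L M SM S →
      (@Sentence.Realize L M (trivialStructure L M) φ) → φ ∈ S := by
    intro φ S hS hbad M SM hne hmod htriv
    have hempty : ∀ (k : ℕ) (R : L.Relations k),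
        (⟨k, R⟩ : Σ k, L.Relations k) ∈ usedRels φ → ∀ x : Fin k → M, ¬ SM.RelMap R x := by
      intro k R hR x hx
      exact hbad ⟨⟨k, R⟩, hR, (mem_iff_realize (hmax S hS) hne hmod _).mpr
        ((realize_relNonemptySentence SM R).mpr ⟨x, hx⟩)⟩
    exact (mem_iff_realize (hmax S hS) hne hmod φ).mpr
      ((realize_iff_triv_of_usedEmpty SM φ hempty).mpr htriv)
  constructor
  · intro hE
    have hsub : ∀ T : L.Theory, T.IsMaximal →
        (∀ φ ∈ T, {S | S ∈ 𝒯 ∧ φ ∈ S}.Infinite) → T ∈ 𝒯 := by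
      intro T h1 h2
      rw [← hE]
      exact Set.mem_union_right _ ⟨h1, h2⟩
    constructor
    · -- (i)
      intro n hn hinf
      haveI : Nonempty (Fin n) := ⟨⟨0, hn⟩⟩
      apply hsub
      · exact @completeTheory.isMaximal L (Fin n) (trivialStructure L (Fin n)) _
      · intro φ hφ
        have hB := bad_finite 𝒯 hdisj φ
        apply ((hinf.diff hB).mono ?_)
        rintro S ⟨⟨hS, hcard⟩, hSb⟩
        obtain ⟨M, SM, hne, hMcard, hmod⟩ := hcard
        refine ⟨hS, key φ S hS (fun ⟨p, h1, h2⟩ => hSb ⟨hS, p, h1, h2⟩) M SM hne hmod ?_⟩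
        haveI : Finite M := Nat.finite_of_card_ne_zero (by omega)
        exact (triv_realize_sentence_iff_of_equiv (Finite.equivFinOfCardEq hMcard) φ).mpr
          (mem_T0fin_iff.mp hφ)
    · -- (ii)
      intro hyp
      apply hsub
      · exact @completeTheory.isMaximal L ℕ (trivialStructure L ℕ) ⟨0⟩
      · intro φ hφ
        have hB := bad_finite 𝒯 hdisj φ
        set D : Set L.Theory := {S | S ∈ 𝒯 ∧
          ((∃ m : ℕ, fdepth (φ : L.BoundedFormula Empty 0) ≤ m ∧ HasModelCard S m) ∨
            HasInfiniteModel S)} with hD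
        have hDsub : D \ {S | S ∈ 𝒯 ∧ ∃ p : Σ k, L.Relations k, p ∈ usedRels φ ∧
            relNonemptySentence p.2 ∈ S} ⊆ {S | S ∈ 𝒯 ∧ φ ∈ S} := by
          rintro S ⟨⟨hS, hw⟩, hSb⟩
          refine ⟨hS, ?_⟩
          have hbad : ¬ ∃ p : Σ k, L.Relations k, p ∈ usedRels φ ∧
              relNonemptySentence p.2 ∈ S := fun ⟨p, h1, h2⟩ => hSb ⟨hS, p, h1, h2⟩
          rcases hw with ⟨m, hm, M, SM, hne, hMcard, hmod⟩ | ⟨M, SM, hinfM, hmod⟩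
          · have hcard : ((fdepth (φ : L.BoundedFormula Empty 0) : ℕ) : Cardinal.{max u v}) ≤
                Cardinal.mk M := by
              cases finite_or_infinite M with
              | inl h =>
                rcases Nat.eq_zero_or_pos m with rfl | hmpos
                · exact absurd (Nat.card_pos (α := M)).ne' (by rw [hMcard]; omega)
                · rw [mk_eq_of_natCard (by omega) hMcard, Nat.cast_le]
                  exact hm
              | inr h =>
                exact le_trans (Cardinal.nat_lt_aleph0 _).le (Cardinal.aleph0_le_mk M)
            exact key φ S hS hbad M SM hne hmod
              ((triv_sentence_iff φ hcard (le_trans (Cardinal.nat_lt_aleph0 _).le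
                (Cardinal.aleph0_le_mk ℕ))).mpr (mem_T0inf_iff.mp hφ))
          · haveI := hinfM
            exact key φ S hS hbad M SM inferInstance hmod
              ((triv_sentence_iff φ (le_trans (Cardinal.nat_lt_aleph0 _).le
                  (Cardinal.aleph0_le_mk M)) (le_trans (Cardinal.nat_lt_aleph0 _).le
                  (Cardinal.aleph0_le_mk ℕ))).mpr (mem_T0inf_iff.mp hφ))
        have hDinf : D.Infinite := by
          rcases hyp with hunb | hinfI
          · by_contra hDfin
            rw [Set.not_infinite] at hDfin
            set g : L.Theory → ℕ := fun S =>
              if h : ∃ m : ℕ, fdepth (φ : L.BoundedFormula Empty 0) ≤ m ∧ HasModelCard S m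
              then h.choose else 0 with hg
            set N0 := hDfin.toFinset.sup g with hN0
            obtain ⟨S, hS, m, hm, hcard⟩ :=
              hunb (max N0 (fdepth (φ : L.BoundedFormula Empty 0)))
            have hmpos : 0 < m := lt_of_le_of_lt (Nat.zero_le _) hm
            have hex : ∃ m : ℕ, fdepth (φ : L.BoundedFormula Empty 0) ≤ m ∧
                HasModelCard S m := ⟨m, le_trans (le_max_right _ _) hm.le, hcard⟩
            have hSD : S ∈ D := ⟨hS, Or.inl hex⟩
            have hgS : g S = hex.choose := by rw [hg]; simp [hex]
            have hspec := hex.choose_spec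
            have hmeq : m = g S := by
              rw [hgS]
              exact card_unique (hmax S hS) hmpos hcard hspec.2
            have hle : g S ≤ N0 := Finset.le_sup (hDfin.mem_toFinset.mpr hSD)
            have := le_max_left N0 (fdepth (φ : L.BoundedFormula Empty 0))
            omega
          · exact hinfI.mono (fun S hS => ⟨hS.1, Or.inr hS.2⟩)
        exact (hDinf.diff hB).mono hDsub
  · rintro ⟨h1, h2⟩
    refine Set.Subset.antisymm ?_ Set.subset_union_left
    rintro T (hT | ⟨hTmax, hTinf⟩)
    · exact hT
    · have hrel : ∀ (k : ℕ) (R : L.Relations k), relNonemptySentence R ∉ T := by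
        intro k R hmem
        refine hTinf _ hmem ?_
        apply Set.Subsingleton.finite
        intro S hS S' hS'
        by_contra hne
        exact hdisj S hS.1 S' hS'.1 hne k R ⟨hS.2, hS'.2⟩
      obtain ⟨M⟩ := hTmax.1
      have hne : Nonempty M := M.nonempty'
      have hmod : @FirstOrder.Language.Theory.Model L M M.struc T := M.is_model
      have hempty : ∀ (k : ℕ) (R : L.Relations k) (x : Fin k → M), ¬ M.struc.RelMap R x := by
        intro k R x hx
        exact hrel k R ((mem_iff_realize hTmax hne hmod _).mpr
          ((realize_relNonemptySentence M.struc R).mpr ⟨x, hx⟩))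
      have hTeq : ∀ φ : L.Sentence, φ ∈ T ↔
          @Sentence.Realize L M (trivialStructure L M) φ := fun φ =>
        (mem_iff_realize hTmax hne hmod φ).trans
          (realize_iff_triv_of_usedEmpty M.struc φ (fun k R _ x => hempty k R x))
      cases finite_or_infinite M with
      | inl hfin =>
        have hn : 0 < Nat.card M := Nat.card_pos
        have hTeq2 : T = T0fin L (Nat.card M) := by
          ext φ
          rw [hTeq φ, mem_T0fin_iff]
          exact triv_realize_sentence_iff_of_equiv (Finite.equivFinOfCardEq rfl) φ
        rw [hTeq2]
        apply h1 _ hn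
        have hmkM : Cardinal.mk M = (Nat.card M : ℕ) := mk_eq_of_natCard (by omega) rfl
        have hφn : (Sentence.cardGe L (Nat.card M) ⊓
            (Sentence.cardGe L (Nat.card M + 1)).not : L.Sentence) ∈ T := by
          rw [mem_iff_realize hTmax hne hmod]
          letI := M.struc
          have hr1 : (M : Type (max u v)) ⊨ Sentence.cardGe L (Nat.card M) := by
            rw [Sentence.realize_cardGe, hmkM]
          have hr2 : (M : Type (max u v)) ⊨ (Sentence.cardGe L (Nat.card M + 1)).not := by
            rw [Sentence.realize_not, Sentence.realize_cardGe, hmkM, Nat.cast_le]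
            omega
          exact Formula.realize_inf.mpr ⟨hr1, hr2⟩
        apply (hTinf _ hφn).mono
        rintro S ⟨hS, hφS⟩
        refine ⟨hS, ?_⟩
        obtain ⟨MS⟩ := (hmax S hS).1
        have h := (mem_iff_realize (hmax S hS) MS.nonempty' MS.is_model _).mp hφS
        obtain ⟨hr1, hr2⟩ := Formula.realize_inf.mp h
        letI := MS.struc
        have hr1' : (MS : Type (max u v)) ⊨ Sentence.cardGe L (Nat.card M) := hr1
        have hr2' : (MS : Type (max u v)) ⊨ (Sentence.cardGe L (Nat.card M + 1)).not := hr2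
        rw [Sentence.realize_cardGe] at hr1'
        rw [Sentence.realize_not, Sentence.realize_cardGe] at hr2' 
        have hlt : Cardinal.mk MS < ((Nat.card M + 1 : ℕ) : Cardinal) := lt_of_not_ge hr2'
        obtain ⟨k, hk⟩ := Cardinal.lt_aleph0.mp (hlt.trans (Cardinal.nat_lt_aleph0 _))
        rw [hk] at hr1' hlt
        have hk1 : Nat.card M ≤ k := by exact_mod_cast hr1' 
        have hk2 : k < Nat.card M + 1 := by exact_mod_cast hlt
        have hkeq : k = Nat.card M := by omega
        refine ⟨MS, MS.struc, MS.nonempty', ?_, MS.is_model⟩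
        rw [natCard_eq_of_mk hk, hkeq]
      | inr hinf =>
        have hTeq2 : T = T0inf L := by
          ext φ
          rw [hTeq φ, mem_T0inf_iff]
          exact triv_sentence_iff φ
            (le_trans (Cardinal.nat_lt_aleph0 _).le (Cardinal.aleph0_le_mk M))
            (le_trans (Cardinal.nat_lt_aleph0 _).le (Cardinal.aleph0_le_mk ℕ))
        rw [hTeq2]
        apply h2
        by_cases hI : {S | S ∈ 𝒯 ∧ HasInfiniteModel S}.Infinite
        · exact Or.inr hI
        · left
          intro N
          have hφN : Sentence.cardGe L (N + 1) ∈ T := by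
            rw [mem_iff_realize hTmax hne hmod]
            letI := M.struc
            rw [Sentence.realize_cardGe]
            exact le_trans (Cardinal.nat_lt_aleph0 _).le (Cardinal.aleph0_le_mk M)
          obtain ⟨S, hSmem⟩ := ((hTinf _ hφN).diff (Set.not_infinite.mp hI)).nonempty
          obtain ⟨⟨hS𝒯, hφS⟩, hSni⟩ := hSmem
          obtain ⟨MS⟩ := (hmax S hS𝒯).1
          have hfin : Finite MS := by
            by_contra h
            exact hSni ⟨hS𝒯, MS, MS.struc, not_finite_iff_infinite.mp h, MS.is_model⟩
          have hcard := (mem_iff_realize (hmax S hS𝒯) MS.nonempty' MS.is_model _).mp hφS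
          letI := MS.struc
          rw [Sentence.realize_cardGe] at hcard
          have hmk : Cardinal.mk MS = ((Nat.card MS : ℕ) : Cardinal) :=
            mk_eq_of_natCard (Nat.card_pos (α := MS)).ne' rfl
          rw [hmk, Nat.cast_le] at hcard
          exact ⟨S, hS𝒯, Nat.card MS, by omega, MS, MS.struc, MS.nonempty', rfl, MS.is_model⟩
end

section
/- Let L be a relational language and let 𝒯 be a set of finitely categorical complete satisfiable L-theories (each member has a finite model) with pairwise disjoint languages. Then 𝒯 is E-closed (Cl_E(𝒯) = 𝒯) if and only if condition (i) holds — for every n ∈ ω∖{0}, if infinitely many theories in 𝒯 have an n-element model then T⁰_n ∈ 𝒯 — and there is N ∈ ω such that no theory in 𝒯 has an n-element model for any n > N. -/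
open FirstOrder FirstOrder.Language

universe u v

variable {L : FirstOrder.Language.{u, v}}

/-!
For an ultrafilter `U` concentrated on `𝒯`, the ultralimit `{φ | ∀ᶠ S in U, φ ∈ S}` is a complete
theory lying in `ClE 𝒯`, and an accumulation point when `U` is non-principal. Having an
`n`-element model is the single sentence `cardGe n ∧ ¬cardGe (n + 1)`, so it passes to and from
ultralimits.

If `ClE 𝒯 = 𝒯` and model sizes in `𝒯` were unbounded, an ultralimit along theories with ever
larger models would contain every `cardGe k`, yet lie in `𝒯`, whose members have finite models.
An ultralimit of infinitely many theories with `n`-element models has an `n`-element model, and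
since each relation is nonempty in at most one theory of `𝒯`, every relation is empty in it:
the limit is `T⁰_n`, which therefore lies in `𝒯`. Conversely, if model sizes are bounded by `N`,
an accumulation point has a model of some size `n ≤ N` with all relations empty, so it is
`T⁰_n`, and infinitely many members of `𝒯` have `n`-element models; condition (i) applies.
-/

universe w

open Cardinal Filter Set Structure

namespace FirstOrder.Language

theorem Theory.IsMaximal.mem_iff_realize {T : L.Theory} (hT : T.IsMaximal) {M : Type w}
    [L.Structure M] [M ⊨ T] {φ : L.Sentence} : φ ∈ T ↔ M ⊨ φ := by
  refine ⟨T.realize_sentence_of_mem, fun hφ => (hT.mem_or_not_mem φ).resolve_right fun hn => ?_⟩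
  exact (Sentence.realize_not M).1 (T.realize_sentence_of_mem hn) hφ

theorem Theory.IsMaximal.eq_completeTheory {T : L.Theory} (hT : T.IsMaximal) (M : Type w)
    [L.Structure M] [M ⊨ T] : T = L.completeTheory M :=
  Set.ext fun _ => hT.mem_iff_realize.trans mem_completeTheory.symm

theorem Theory.IsMaximal.not_mem_iff {T : L.Theory} (hT : T.IsMaximal) {φ : L.Sentence} :
    φ.not ∈ T ↔ φ ∉ T := by
  obtain ⟨M⟩ := hT.1
  simp only [hT.mem_iff_realize (M := M), Sentence.realize_not]

theorem Theory.IsMaximal.inf_mem_iff {T : L.Theory} (hT : T.IsMaximal) {φ ψ : L.Sentence} :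
    φ ⊓ ψ ∈ T ↔ φ ∈ T ∧ ψ ∈ T := by
  obtain ⟨M⟩ := hT.1
  simp only [hT.mem_iff_realize (M := M)]
  exact Formula.realize_inf

theorem realize_cardGe_iff_le_natCard {M : Type w} [L.Structure M] [Finite M] {k : ℕ} :
    M ⊨ Sentence.cardGe L k ↔ k ≤ Nat.card M := by
  rw [Sentence.realize_cardGe, ← Nat.cast_card, Nat.cast_le]

def exactCardSentence (L : Language.{u, v}) (n : ℕ) : L.Sentence :=
  Sentence.cardGe L n ⊓ (Sentence.cardGe L (n + 1)).not

theorem HasModelCard.cardGe_mem_iff {S : L.Theory} (hS : S.IsMaximal) {n : ℕ} (hn : 0 < n)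
    (h : HasModelCard S n) {k : ℕ} : Sentence.cardGe L k ∈ S ↔ k ≤ n := by
  obtain ⟨M, _, _, hcard, _⟩ := h
  have : Finite M := Nat.finite_of_card_ne_zero (by omega)
  rw [hS.mem_iff_realize (M := M), realize_cardGe_iff_le_natCard, hcard]

theorem hasModelCard_iff_exactCardSentence_mem {S : L.Theory} (hS : S.IsMaximal) {n : ℕ}
    (hn : 0 < n) : HasModelCard S n ↔ exactCardSentence L n ∈ S := by
  rw [exactCardSentence, hS.inf_mem_iff, hS.not_mem_iff]
  refine ⟨fun h => by simp [h.cardGe_mem_iff hS hn], fun ⟨hge, hlt⟩ => ?_⟩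
  obtain ⟨M⟩ := hS.1
  rw [hS.mem_iff_realize (M := M), Sentence.realize_cardGe] at hge hlt
  have : Finite M := lt_aleph0_iff_finite.1 ((not_le.1 hlt).trans natCast_lt_aleph0)
  rw [← Nat.cast_card, Nat.cast_le] at hge hlt
  exact ⟨M, inferInstance, inferInstance, by omega, inferInstance⟩

theorem Theory.IsMaximal.exists_hasModelCard {T : L.Theory} (hT : T.IsMaximal) {k : ℕ}
    (hk : Sentence.cardGe L k ∉ T) : ∃ n, 0 < n ∧ HasModelCard T n := by
  obtain ⟨M⟩ := hT.1
  rw [hT.mem_iff_realize (M := M), Sentence.realize_cardGe] at hk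
  have : Finite M := lt_aleph0_iff_finite.1 ((not_le.1 hk).trans natCast_lt_aleph0)
  exact ⟨Nat.card M, Nat.card_pos, M, inferInstance, inferInstance, rfl, inferInstance⟩

theorem realize_relNonemptySentence {M : Type w} [L.Structure M] {k : ℕ} (R : L.Relations k) :
    M ⊨ relNonemptySentence R ↔ ∃ x : Fin k → M, RelMap R x := by
  simp [relNonemptySentence, Sentence.Realize]

theorem eq_t0fin_of_hasModelCard [L.IsRelational] {T : L.Theory} (hT : T.IsMaximal) {n : ℕ}
    (hn : 0 < n) (h : HasModelCard T n)
    (hrel : ∀ (k : ℕ) (R : L.Relations k), relNonemptySentence R ∉ T) : T = T0fin L n := by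
  obtain ⟨M, _, _, hcard, _⟩ := h
  have : Finite M := Nat.finite_of_card_ne_zero (by omega)
  let _ := trivialStructure L (Fin n)
  have hempty (k : ℕ) (R : L.Relations k) (x : Fin k → M) : ¬RelMap R x := fun hx =>
    hrel k R (hT.mem_iff_realize.2 ((realize_relNonemptySentence R).2 ⟨x, hx⟩))
  let e : M ≃[L] Fin n :=
    { toEquiv := Finite.equivFinOfCardEq hcard
      map_fun' := fun f => isEmptyElim f
      map_rel' := fun R x => iff_of_false id (hempty _ R x) }
  exact (hT.eq_completeTheory M).trans (StrongHomClass.elementarilyEquivalent e)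

def ultralimit (U : Ultrafilter L.Theory) : L.Theory :=
  {φ | ∀ᶠ S in (U : Filter L.Theory), φ ∈ S}

theorem isMaximal_ultralimit {U : Ultrafilter L.Theory}
    (hU : ∀ᶠ S in (U : Filter L.Theory), S.IsMaximal) : (ultralimit U).IsMaximal := by
  refine ⟨Theory.isSatisfiable_iff_isFinitelySatisfiable.2 fun T₀ hT₀ => ?_,
    fun φ => U.eventually_or.1 (hU.mono fun S hS => hS.mem_or_not_mem φ)⟩
  obtain ⟨S, hS, hT₀S⟩ := (hU.and ((eventually_all_finset T₀).2 fun φ hφ => hT₀ hφ)).exists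
  exact hS.1.mono hT₀S

/-- The members of `ClE 𝒯` that need not lie in `𝒯`. -/
def IsEAccPt (𝒯 : Set L.Theory) (T : L.Theory) : Prop :=
  T.IsMaximal ∧ ∀ φ ∈ T, {S ∈ 𝒯 | φ ∈ S}.Infinite

theorem IsEAccPt.mono {𝒮 𝒯 : Set L.Theory} (h : 𝒮 ⊆ 𝒯) {T : L.Theory} (hT : IsEAccPt 𝒮 T) :
    IsEAccPt 𝒯 T :=
  ⟨hT.1, fun φ hφ => (hT.2 φ hφ).mono fun _ hS => ⟨h hS.1, hS.2⟩⟩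

theorem IsEAccPt.mem_clE {𝒯 : Set L.Theory} {T : L.Theory} (hT : IsEAccPt 𝒯 T) : T ∈ ClE 𝒯 :=
  Or.inr hT

theorem isEAccPt_ultralimit {U : Ultrafilter L.Theory} (hcof : (U : Filter L.Theory) ≤ cofinite)
    {𝒮 : Set L.Theory} (h𝒮 : 𝒮 ∈ U) (hmax : ∀ S ∈ 𝒮, S.IsMaximal) :
    IsEAccPt 𝒮 (ultralimit U) :=
  ⟨isMaximal_ultralimit (mem_of_superset h𝒮 hmax), fun _ hφ =>
    frequently_cofinite_mem_iff_infinite.1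
      ((Eventually.frequently (inter_mem h𝒮 hφ)).filter_mono hcof)⟩

theorem ultralimit_mem_clE {U : Ultrafilter L.Theory} {𝒯 : Set L.Theory} (h𝒯 : 𝒯 ∈ U)
    (hmax : ∀ S ∈ 𝒯, S.IsMaximal) : ultralimit U ∈ ClE 𝒯 := by
  rcases U.le_cofinite_or_eq_pure with hcof | ⟨S, rfl⟩
  · exact (isEAccPt_ultralimit hcof h𝒯 hmax).mem_clE
  · have : ultralimit (pure S) = S := by ext φ; rfl
    exact Or.inl (this ▸ h𝒯)

theorem PairwiseDisjointLanguages.subsingleton {𝒯 : Set L.Theory}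
    (hdisj : PairwiseDisjointLanguages 𝒯) {k : ℕ} (R : L.Relations k) :
    {S ∈ 𝒯 | relNonemptySentence R ∈ S}.Subsingleton := fun S hS S' hS' =>
  by_contra fun hne => hdisj S hS.1 S' hS'.1 hne k R ⟨hS.2, hS'.2⟩

theorem IsEAccPt.relNonemptySentence_notMem {𝒯 : Set L.Theory}
    (hdisj : PairwiseDisjointLanguages 𝒯) {T : L.Theory} (hT : IsEAccPt 𝒯 T) {k : ℕ}
    (R : L.Relations k) : relNonemptySentence R ∉ T := fun hR =>
  hT.2 _ hR (hdisj.subsingleton R).finite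

theorem t0fin_mem_of_clE_eq [L.IsRelational] {𝒯 : Set L.Theory} (hE : ClE 𝒯 = 𝒯)
    (hmax : ∀ T ∈ 𝒯, T.IsMaximal) (hdisj : PairwiseDisjointLanguages 𝒯) {n : ℕ} (hn : 0 < n)
    (hinf : {T ∈ 𝒯 | HasModelCard T n}.Infinite) : T0fin L n ∈ 𝒯 := by
  have := hinf.cofinite_inf_principal_neBot
  set U := Ultrafilter.of (cofinite ⊓ 𝓟 {T ∈ 𝒯 | HasModelCard T n})
  have hcof : (U : Filter L.Theory) ≤ cofinite := (Ultrafilter.of_le _).trans inf_le_left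
  have h𝒮 : {T ∈ 𝒯 | HasModelCard T n} ∈ U :=
    Ultrafilter.of_le _ (mem_inf_of_right (mem_principal_self _))
  have hT : IsEAccPt 𝒯 (ultralimit U) :=
    (isEAccPt_ultralimit hcof h𝒮 fun S hS => hmax S hS.1).mono (sep_subset _ _)
  have hcard : HasModelCard (ultralimit U) n :=
    (hasModelCard_iff_exactCardSentence_mem hT.1 hn).2 <| mem_of_superset h𝒮 fun S hS =>
      (hasModelCard_iff_exactCardSentence_mem (hmax S hS.1) hn).1 hS.2
  rw [← eq_t0fin_of_hasModelCard hT.1 hn hcard fun _ => hT.relNonemptySentence_notMem hdisj]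
  exact hE ▸ hT.mem_clE

theorem exists_bound_of_clE_eq {𝒯 : Set L.Theory} (hE : ClE 𝒯 = 𝒯)
    (hmax : ∀ T ∈ 𝒯, T.IsMaximal) (hfin : ∀ T ∈ 𝒯, HasFiniteModel T) :
    ∃ N : ℕ, ∀ T ∈ 𝒯, ∀ n : ℕ, N < n → ¬HasModelCard T n := by
  by_contra! hunb
  set B : ℕ → Set L.Theory := fun N => {T ∈ 𝒯 | ∃ n, N < n ∧ HasModelCard T n}
  have hB : Antitone B := fun N N' hle T ⟨hT, n, hn, h⟩ => ⟨hT, n, hle.trans_lt hn, h⟩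
  have : (⨅ N, 𝓟 (B N)).NeBot :=
    iInf_neBot_of_directed' (monotone_principal.comp_antitone hB).directed_ge fun N =>
      principal_neBot_iff.2 (hunb N)
  set U := Ultrafilter.of (⨅ N, 𝓟 (B N))
  have hBU (N : ℕ) : B N ∈ U := Ultrafilter.of_le _ (mem_iInf_of_mem N (mem_principal_self _))
  have hT𝒯 : ultralimit U ∈ 𝒯 :=
    hE ▸ ultralimit_mem_clE (mem_of_superset (hBU 0) (sep_subset _ _)) hmax
  obtain ⟨m, hm, hTm⟩ := hfin _ hT𝒯
  have hbig : Sentence.cardGe L (m + 1) ∈ ultralimit U := mem_of_superset (hBU (m + 1))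
    fun S ⟨hS, n, hn, h⟩ => (h.cardGe_mem_iff (hmax S hS) (by omega)).2 hn.le
  exact absurd ((hTm.cardGe_mem_iff (hmax _ hT𝒯) hm).1 hbig) (by omega)

theorem clE_eq_of_bounded [L.IsRelational] {𝒯 : Set L.Theory} (hmax : ∀ T ∈ 𝒯, T.IsMaximal)
    (hfin : ∀ T ∈ 𝒯, HasFiniteModel T) (hdisj : PairwiseDisjointLanguages 𝒯)
    (hT0 : ∀ n : ℕ, 0 < n → {T ∈ 𝒯 | HasModelCard T n}.Infinite → T0fin L n ∈ 𝒯) {N : ℕ}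
    (hN : ∀ T ∈ 𝒯, ∀ n : ℕ, N < n → ¬HasModelCard T n) : ClE 𝒯 = 𝒯 := by
  refine subset_antisymm (fun T hT => hT.elim id fun (hT : IsEAccPt 𝒯 T) => ?_) subset_union_left
  have hbig : Sentence.cardGe L (N + 1) ∉ T := fun h => by
    obtain ⟨S, hS, hSN⟩ := (hT.2 _ h).nonempty
    obtain ⟨m, hm, hSm⟩ := hfin S hS
    exact hN S hS m ((hSm.cardGe_mem_iff (hmax S hS) hm).1 hSN) hSm
  obtain ⟨n, hn, hTn⟩ := hT.1.exists_hasModelCard hbig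
  have hinf : {S ∈ 𝒯 | HasModelCard S n}.Infinite :=
    (hT.2 _ ((hasModelCard_iff_exactCardSentence_mem hT.1 hn).1 hTn)).mono fun S hS =>
      ⟨hS.1, (hasModelCard_iff_exactCardSentence_mem (hmax S hS.1) hn).2 hS.2⟩
  rw [eq_t0fin_of_hasModelCard hT.1 hn hTn fun _ => hT.relNonemptySentence_notMem hdisj]
  exact hT0 n hn hinf

end FirstOrder.Language

open FirstOrder.Language

/-- Corollary 2.6: a class `𝒯` of finitely categorical complete theories with pairwise
disjoint languages is `E`-closed iff condition (i) holds and the finite cardinalities of models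
of theories of `𝒯` are bounded by some `N`. -/
theorem cor_2_6 (L : FirstOrder.Language.{u, v}) [L.IsRelational]
    (𝒯 : Set (L.Theory)) (hmax : ∀ T ∈ 𝒯, T.IsMaximal)
    (hfin : ∀ T ∈ 𝒯, HasFiniteModel T)
    (hdisj : PairwiseDisjointLanguages 𝒯) :
    ClE 𝒯 = 𝒯 ↔
      ((∀ n : ℕ, 0 < n → {T ∈ 𝒯 | HasModelCard T n}.Infinite → T0fin L n ∈ 𝒯) ∧
       ∃ N : ℕ, ∀ T ∈ 𝒯, ∀ n : ℕ, N < n → ¬HasModelCard T n) :=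
  ⟨fun hE => ⟨fun _ hn hinf => t0fin_mem_of_clE_eq hE hmax hdisj hn hinf,
      exists_bound_of_clE_eq hE hmax hfin⟩,
    fun ⟨hT0, _, hN⟩ => clE_eq_of_bounded hmax hfin hdisj hT0 hN⟩
end

section
/- Let L be a countable relational language and let 𝒯 be a set of ℵ₀-categorical complete satisfiable L-theories with pairwise disjoint languages. Then 𝒯 is E-closed (Cl_E(𝒯) = 𝒯) if and only if condition (ii) holds: if infinitely many theories in 𝒯 have infinite models (equivalently here, if 𝒯 is infinite, since every ℵ₀-categorical theory has only infinite models), then T⁰_∞ ∈ 𝒯. -/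
open FirstOrder FirstOrder.Language

universe u v

variable {L : FirstOrder.Language.{u, v}}

section ClEAuxSection
open Cardinal

namespace ClEAux

variable {L : FirstOrder.Language.{u, v}}

/-- Relation symbols occurring in a bounded formula. -/
def usedRels {α : Type*} : ∀ {n : ℕ}, L.BoundedFormula α n → Set (Σ k, L.Relations k)
  | _, BoundedFormula.falsum => ∅
  | _, BoundedFormula.equal _ _ => ∅
  | _, @BoundedFormula.rel _ _ _ k R _ => {⟨k, R⟩}
  | _, BoundedFormula.imp f g => usedRels f ∪ usedRels g
  | _, BoundedFormula.all f => usedRels f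

theorem usedRels_finite {α : Type*} : ∀ {n : ℕ} (φ : L.BoundedFormula α n),
    (usedRels φ).Finite
  | _, BoundedFormula.falsum => Set.finite_empty
  | _, BoundedFormula.equal _ _ => Set.finite_empty
  | _, BoundedFormula.rel _ _ => Set.finite_singleton _
  | _, BoundedFormula.imp f g => (usedRels_finite f).union (usedRels_finite g)
  | _, BoundedFormula.all f => usedRels_finite f

theorem term_realize_congr [L.IsRelational] {M : Type*} (S1 S2 : L.Structure M)
    {β : Type*} (t : L.Term β) (v : β → M) :
    @Term.realize L M S1 β v t = @Term.realize L M S2 β v t := by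
  induction t with
  | var => rfl
  | func f _ _ => exact isEmptyElim f

theorem realize_congr {α : Type*} [L.IsRelational] {M : Type*} (S1 S2 : L.Structure M) :
    ∀ {n : ℕ} (φ : L.BoundedFormula α n),
      (∀ r ∈ usedRels φ, ∀ x, @Structure.RelMap L M S1 r.1 r.2 x ↔
        @Structure.RelMap L M S2 r.1 r.2 x) →
      ∀ (v : α → M) (xs : Fin n → M),
        (@BoundedFormula.Realize L M S1 α n φ v xs ↔ @BoundedFormula.Realize L M S2 α n φ v xs)
  | _, BoundedFormula.falsum, _, _, _ => Iff.rfl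
  | _, BoundedFormula.equal t₁ t₂, _, v, xs => by
      simp only [BoundedFormula.Realize, term_realize_congr S1 S2]
  | _, @BoundedFormula.rel _ _ _ k R ts, h, v, xs => by
      simp only [BoundedFormula.Realize]
      rw [funext fun i => term_realize_congr S1 S2 (ts i) (Sum.elim v xs)]
      exact h ⟨k, R⟩ rfl _
  | _, BoundedFormula.imp f g, h, v, xs => by
      simp only [BoundedFormula.Realize]
      rw [realize_congr S1 S2 f (fun r hr => h r (Or.inl hr)) v xs,
        realize_congr S1 S2 g (fun r hr => h r (Or.inr hr)) v xs]
  | _, BoundedFormula.all f, h, v, xs => by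
      simp only [BoundedFormula.Realize]
      exact forall_congr' fun x => realize_congr S1 S2 f h v _

theorem realize_relNonempty {M : Type*} [S : L.Structure M] {k : ℕ} (R : L.Relations k) :
    M ⊨ relNonemptySentence R ↔ ∃ x : Fin k → M, Structure.RelMap R x := by
  rw [relNonemptySentence, Sentence.Realize, BoundedFormula.realize_exs]
  refine exists_congr fun x => ?_
  rw [BoundedFormula.realize_rel]
  rfl

/-- The theory of infinite structures with all relations empty. -/
def trivTheory (L : FirstOrder.Language.{u, v}) [L.IsRelational] : L.Theory :=
  L.infiniteTheory ∪ Set.range (fun r : Σ n, L.Relations n => (relNonemptySentence r.2).not)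

theorem model_trivTheory_iff [L.IsRelational] {M : Type*} [S : L.Structure M] :
    M ⊨ trivTheory L ↔ Infinite M ∧ ∀ (k : ℕ) (R : L.Relations k) (x : Fin k → M),
      ¬ Structure.RelMap R x := by
  rw [trivTheory, Theory.model_union_iff, model_infiniteTheory_iff]
  refine and_congr Iff.rfl ?_
  rw [Theory.model_iff]
  constructor
  · intro h k R x hx
    have := h _ ⟨⟨k, R⟩, rfl⟩
    rw [Sentence.realize_not, realize_relNonempty] at this
    exact this ⟨x, hx⟩
  · rintro h _ ⟨⟨k, R⟩, rfl⟩
    rw [Sentence.realize_not, realize_relNonempty]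
    rintro ⟨x, hx⟩
    exact h k R x hx

theorem model_trivialStructure [L.IsRelational] (M : Type*) [Infinite M] :
    @FirstOrder.Language.Theory.Model L M (trivialStructure L M) (trivTheory L) := by
  letI := trivialStructure L M
  rw [model_trivTheory_iff]
  exact ⟨‹_›, fun _ _ _ h => h⟩

instance [L.IsRelational] : IsEmpty (Σ n, L.Functions n) :=
  ⟨fun f => isEmptyElim f.2⟩

theorem card_le_aleph0 [L.IsRelational] (hcount : Countable (Σ n, L.Relations n)) :
    L.card ≤ ℵ₀ := by
  haveI := hcount
  haveI : Countable L.Symbols := by unfold Language.Symbols; infer_instance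
  exact Cardinal.mk_le_aleph0

theorem trivTheory_categorical (L : FirstOrder.Language.{u, v}) [L.IsRelational] :
    (Cardinal.aleph0 : Cardinal.{max u v}).Categorical (trivTheory L) := by
  intro M N hM hN
  obtain ⟨e⟩ := Cardinal.eq.mp (hM.trans hN.symm)
  have hMt := model_trivTheory_iff.mp M.is_model
  have hNt := model_trivTheory_iff.mp N.is_model
  exact ⟨⟨e, fun f => isEmptyElim f, fun {n} r x =>
    iff_of_false (hNt.2 n r _) (hMt.2 n r x)⟩⟩

theorem trivTheory_isComplete (L : FirstOrder.Language.{u, v}) [L.IsRelational]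
    (hcount : Countable (Σ n, L.Relations n)) :
    (trivTheory L).IsComplete := by
  refine (trivTheory_categorical L).isComplete ℵ₀ _ le_rfl
    (by rw [Cardinal.lift_le]; exact (card_le_aleph0 hcount).trans (by simp)) ?_ ?_
  · letI := trivialStructure L (ULift.{max u v} ℕ)
    haveI := model_trivialStructure (L := L) (ULift.{max u v} ℕ)
    exact Theory.Model.isSatisfiable (ULift.{max u v} ℕ)
  · intro M
    exact (model_trivTheory_iff.mp M.is_model).1

/-- Key lemma: the complete theory of any infinite structure with all relations empty
is `T0inf`. -/
theorem completeTheory_triv (L : FirstOrder.Language.{u, v}) [L.IsRelational]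
    (hcount : Countable (Σ n, L.Relations n)) {M : Type*} (S : L.Structure M)
    (hinf : Infinite M)
    (hemp : ∀ (k : ℕ) (R : L.Relations k) (x : Fin k → M), ¬ @Structure.RelMap L M S k R x) :
    @FirstOrder.Language.completeTheory L M S = T0inf L := by
  letI := S
  haveI : Nonempty M := inferInstance
  haveI hMmod : M ⊨ trivTheory L := model_trivTheory_iff.mpr ⟨hinf, hemp⟩
  letI := trivialStructure L ℕ
  haveI hNmod : ℕ ⊨ trivTheory L := model_trivialStructure (L := L) ℕ
  have hC := trivTheory_isComplete L hcount
  ext φ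
  rw [T0inf, completeTheory, completeTheory, Set.mem_setOf_eq, Set.mem_setOf_eq,
    hC.realize_sentence_iff φ M, hC.realize_sentence_iff φ ℕ]

theorem mem_iff_realize {T : L.Theory} (hT : T.IsMaximal) {M : Type*} [S : L.Structure M]
    [hM : M ⊨ T] (φ : L.Sentence) : φ ∈ T ↔ M ⊨ φ := by
  constructor
  · exact fun h => Theory.realize_sentence_of_mem T h
  · intro h
    refine (hT.2 φ).resolve_right fun hn => ?_
    exact (Sentence.realize_not M).mp (Theory.realize_sentence_of_mem T hn) h

end ClEAux

end ClEAuxSection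


/-- Corollary 2.7: a class `𝒯` of ℵ₀-categorical complete theories (in a countable relational
language) with pairwise disjoint languages is `E`-closed iff condition (ii) holds: if
infinitely many theories of `𝒯` have infinite models then `T⁰_∞ ∈ 𝒯`. -/
theorem cor_2_7 (L : FirstOrder.Language.{u, v}) [L.IsRelational]
    (hcount : Countable (Σ n, L.Relations n))
    (𝒯 : Set (L.Theory)) (hmax : ∀ T ∈ 𝒯, T.IsMaximal)
    (hcat : ∀ T ∈ 𝒯, Aleph0Categorical T)
    (hdisj : PairwiseDisjointLanguages 𝒯) :
    ClE 𝒯 = 𝒯 ↔ ({T ∈ 𝒯 | HasInfiniteModel T}.Infinite → T0inf L ∈ 𝒯) := by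
  classical
  constructor
  · -- E-closed implies (ii)
    intro hE hinf
    have h𝒯inf : 𝒯.Infinite := hinf.mono (Set.sep_subset _ _)
    letI := trivialStructure L ℕ
    have hT0max : (T0inf L).IsMaximal := completeTheory.isMaximal L ℕ
    have hmem : T0inf L ∈ ClE 𝒯 := by
      refine Or.inr ⟨hT0max, fun φ hφ => ?_⟩
      have hBfin : (⋃ r ∈ ClEAux.usedRels φ,
          {S ∈ 𝒯 | relNonemptySentence r.2 ∈ S}).Finite := by
        refine Set.Finite.biUnion (ClEAux.usedRels_finite φ) fun r _ => ?_
        refine Set.Subsingleton.finite fun S hS S' hS' => ?_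
        by_contra hne
        exact hdisj S hS.1 S' hS'.1 hne r.1 r.2 ⟨hS.2, hS'.2⟩
      refine Set.Infinite.mono ?_ (h𝒯inf.diff hBfin)
      rintro S ⟨hS𝒯, hSB⟩
      refine ⟨hS𝒯, ?_⟩
      obtain ⟨MS, SM, hcnt, hinfM, hmod⟩ := (hcat S hS𝒯).1
      letI := SM
      haveI : MS ⊨ S := hmod
      rw [ClEAux.mem_iff_realize (M := MS) (hmax S hS𝒯)]
      have hempUsed : ∀ r ∈ ClEAux.usedRels φ, ∀ x,
          ¬ @Structure.RelMap L MS SM r.1 r.2 x := by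
        intro r hr x hx
        have hin : relNonemptySentence r.2 ∈ S := by
          refine ((hmax S hS𝒯).2 _).resolve_right fun hn => ?_
          have hb := Theory.realize_sentence_of_mem (M := MS) S hn
          rw [Sentence.realize_not, ClEAux.realize_relNonempty] at hb
          exact hb ⟨x, hx⟩
        exact hSB (Set.mem_biUnion hr ⟨hS𝒯, hin⟩)
      have hcongr := ClEAux.realize_congr SM (trivialStructure L MS) φ
        (fun r hr x => iff_of_false (hempUsed r hr x) id) default default
      have hTh := ClEAux.completeTheory_triv L hcount (trivialStructure L MS) hinfM
        (fun _ _ _ h => h)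
      have htriv : @Sentence.Realize L MS (trivialStructure L MS) φ := by
        have : φ ∈ @completeTheory L MS (trivialStructure L MS) := by rw [hTh]; exact hφ
        exact this
      exact hcongr.mpr htriv
    rw [hE] at hmem
    exact hmem
  · -- (ii) implies E-closed
    intro hii
    refine Set.Subset.antisymm ?_ Set.subset_union_left
    rintro T (hT | ⟨hTmax, hTpop⟩)
    · exact hT
    · obtain ⟨M⟩ := hTmax.1
      have hmem : ∀ φ : L.Sentence, φ ∈ T ↔ M ⊨ φ := fun φ =>
        ClEAux.mem_iff_realize hTmax φ
      have hbot : (⊥ : L.Sentence).not ∈ T := by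
        refine (hTmax.2 ⊥).resolve_left fun h => ?_
        have := (hmem ⊥).mp h
        simp [Sentence.Realize] at this
      have h𝒯inf : 𝒯.Infinite := (hTpop _ hbot).mono (Set.sep_subset _ _)
      have hall : {S ∈ 𝒯 | HasInfiniteModel S} = 𝒯 := by
        refine Set.eq_of_subset_of_subset (Set.sep_subset _ _) fun S hS => ⟨hS, ?_⟩
        obtain ⟨Mc, Sc, _, hinfc, hmodc⟩ := (hcat S hS).1
        exact ⟨Mc, Sc, hinfc, hmodc⟩
      have hT0 : T0inf L ∈ 𝒯 := hii (by rw [hall]; exact h𝒯inf)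
      have hemp : ∀ (k : ℕ) (R : L.Relations k) (x : Fin k → M),
          ¬ Structure.RelMap R x := by
        intro k R x hx
        have hRT : relNonemptySentence R ∈ T :=
          (hmem _).mpr ((ClEAux.realize_relNonempty R).mpr ⟨x, hx⟩)
        have hsub : {S ∈ 𝒯 | relNonemptySentence R ∈ S}.Subsingleton := by
          intro S hS S' hS'
          by_contra hne
          exact hdisj S hS.1 S' hS'.1 hne k R ⟨hS.2, hS'.2⟩
        exact (hTpop _ hRT) hsub.finite
      haveI hinfM : Infinite M := by
        rw [← model_infiniteTheory_iff (L := L), Theory.model_iff]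
        rintro φ ⟨n, rfl⟩
        have hcard : Sentence.cardGe L n ∈ T := by
          refine (hTmax.2 _).resolve_right fun hn => ?_
          obtain ⟨S, hS⟩ := (hTpop _ hn).nonempty
          obtain ⟨Mc, Sc, _, hinfc, hmodc⟩ := (hcat S hS.1).1
          letI := Sc
          haveI : Mc ⊨ S := hmodc
          have hb := Theory.realize_sentence_of_mem (M := Mc) S hS.2
          rw [Sentence.realize_not, Sentence.realize_cardGe] at hb
          exact hb (le_trans (Cardinal.nat_lt_aleph0 n).le (Cardinal.infinite_iff.mp hinfc))
        exact (hmem _).mp hcard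
      have hTeq : T = T0inf L := by
        have h1 : T = completeTheory L M := Set.ext fun φ => hmem φ
        rw [h1, ClEAux.completeTheory_triv L hcount _ hinfM hemp]
      rw [hTeq]
      exact hT0
end

section
/- Let L be a relational language and let T be a complete satisfiable L-theory having no finite models. Then there exists a set 𝒯₀ of finitely categorical complete satisfiable L-theories with T ∈ Cl_E(𝒯₀) if and only if no sentence of T forces the infinity, i.e., if and only if every sentence φ ∈ T has a finite model. -/
open FirstOrder FirstOrder.Language

universe u v w

variable {L : FirstOrder.Language.{u, v}}

/-- The sentence `φ` has a finite (nonempty) model. -/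
def SentenceHasFiniteModel (φ : L.Sentence) : Prop :=
  ∃ (M : Type (max u v)) (S : L.Structure M), Nonempty M ∧ Finite M ∧
    @FirstOrder.Language.Sentence.Realize L M S φ

/-- A complete theory `T` is finitely axiomatizable if some sentence `φ ∈ T` has exactly the
models of `T`: every complete satisfiable theory containing `φ` equals `T`. -/
def FinitelyAxiomatizable (T : L.Theory) : Prop :=
  ∃ φ ∈ T, ∀ T' : L.Theory, T'.IsMaximal → φ ∈ T' → T' = T

section Aux

open Cardinal

private lemma finite_of_not_realize_cardGe {M : Type w} [L.Structure M]
    {n : ℕ} (h : ¬ @FirstOrder.Language.Sentence.Realize L M _ (Sentence.cardGe L n)) :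
    Finite M := by
  rw [Sentence.realize_cardGe, not_le] at h
  exact Cardinal.lt_aleph0_iff_finite.1 (h.trans (Cardinal.nat_lt_aleph0 n))

private lemma le_nat_card_of_realize_cardGe {M : Type w} [L.Structure M] [Finite M]
    {n : ℕ} (h : @FirstOrder.Language.Sentence.Realize L M _ (Sentence.cardGe L n)) :
    n ≤ Nat.card M := by
  rw [Sentence.realize_cardGe] at h
  have := Cardinal.toNat_le_toNat h (Cardinal.lt_aleph0_of_finite M)
  simpa [Nat.card] using this

private lemma cardGe_mem_of_noFinModel {T : L.Theory} (hT : T.IsMaximal)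
    (hnofin : ¬HasFiniteModel T) (n : ℕ) : Sentence.cardGe L n ∈ T := by
  rcases hT.mem_or_not_mem (Sentence.cardGe L n) with h | h
  · exact h
  · exfalso
    obtain ⟨M⟩ := hT.1
    have hnot : M ⊨ (Sentence.cardGe L n).not := M.is_model.realize_of_mem _ h
    rw [Sentence.realize_not] at hnot
    have : Finite M := finite_of_not_realize_cardGe hnot
    exact hnofin ⟨Nat.card M, Nat.card_pos, M, M.struc, M.nonempty', rfl, M.is_model⟩

/-- Construction: a finitely categorical complete theory containing `φ` and `cardGe n`. -/
private lemma exists_fin_theory {T : L.Theory} (hT : T.IsMaximal) (hnofin : ¬HasFiniteModel T)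
    (hfin : ∀ φ ∈ T, SentenceHasFiniteModel φ) {φ : L.Sentence} (hφ : φ ∈ T) (n : ℕ) :
    ∃ S : L.Theory, S.IsMaximal ∧ HasFiniteModel S ∧ φ ∈ S ∧ Sentence.cardGe L n ∈ S := by
  have hψ : φ ⊓ Sentence.cardGe L n ∈ T := by
    refine hT.mem_of_models (Theory.models_sentence_iff.2 fun M => ?_)
    have h1 : M ⊨ φ := M.is_model.realize_of_mem _ hφ
    have h2 : M ⊨ Sentence.cardGe L n :=
      M.is_model.realize_of_mem _ (cardGe_mem_of_noFinModel hT hnofin n)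
    exact Formula.realize_inf.2 ⟨h1, h2⟩
  obtain ⟨M, SM, hne, hfinM, hreal⟩ := hfin _ hψ
  letI := SM
  letI := hne
  letI := hfinM
  rw [show Sentence.Realize M (φ ⊓ Sentence.cardGe L n) ↔ _ from Formula.realize_inf] at hreal
  exact ⟨L.completeTheory M, completeTheory.isMaximal L M,
    ⟨Nat.card M, Nat.card_pos, M, SM, hne, rfl, model_completeTheory⟩,
    mem_completeTheory.2 hreal.1, mem_completeTheory.2 hreal.2⟩

end Aux

/-- Proposition 3.1: a complete theory `T` without finite models belongs to the `E`-closure of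
some family of finitely categorical complete theories iff no sentence of `T` forces the
infinity, i.e. iff every sentence of `T` has a finite model. -/
theorem prop_3_1 (L : FirstOrder.Language.{u, v}) [L.IsRelational]
    (T : L.Theory) (hT : T.IsMaximal) (hnofin : ¬HasFiniteModel T) :
    (∃ 𝒯₀ : Set (L.Theory), (∀ S ∈ 𝒯₀, S.IsMaximal ∧ HasFiniteModel S) ∧ T ∈ ClE 𝒯₀) ↔
      ∀ φ ∈ T, SentenceHasFiniteModel φ := by
  constructor
  · rintro ⟨𝒯₀, h𝒯₀, hcl⟩ φ hφ
    rcases hcl with h | ⟨_, h⟩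
    · exact absurd (h𝒯₀ T h).2 hnofin
    · obtain ⟨S, hS𝒯, hφS⟩ := (h φ hφ).nonempty
      obtain ⟨n, hn, M, SM, hne, hcard, hmod⟩ := (h𝒯₀ S hS𝒯).2
      subst hcard
      exact ⟨M, SM, hne, (Nat.card_pos_iff.1 hn).2, hmod.realize_of_mem φ hφS⟩
  · intro hfin
    refine ⟨{S | S.IsMaximal ∧ HasFiniteModel S}, fun S hS => hS, Or.inr ⟨hT, fun φ hφ => ?_⟩⟩
    intro hA
    classical
    set g : L.Theory → ℕ := fun S => if h : HasFiniteModel S then h.choose else 0 with hg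
    obtain ⟨N, hN⟩ := (hA.image g).bddAbove
    obtain ⟨S, hSmax, hSfin, hφS, hcard⟩ := exists_fin_theory hT hnofin hfin hφ (N + 1)
    have hSA : S ∈ {S ∈ {S : L.Theory | S.IsMaximal ∧ HasFiniteModel S} | φ ∈ S} :=
      ⟨⟨hSmax, hSfin⟩, hφS⟩
    have hgS : g S ≤ N := hN (Set.mem_image_of_mem g hSA)
    simp only [hg, dif_pos hSfin] at hgS
    have hspec := hSfin.choose_spec
    obtain ⟨M, SM, hne, hcardM, hmod⟩ := hspec.2
    have hfinM : Finite M := (Nat.card_pos_iff.1 (hcardM ▸ hspec.1)).2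
    have hge : N + 1 ≤ Nat.card M :=
      le_nat_card_of_realize_cardGe (hmod.realize_of_mem _ hcard)
    omega
end

section
/- Let L be a relational language and let 𝒯 be a set of finitely axiomatizable complete satisfiable L-theories. Then: (a) every T ∈ 𝒯 is isolated in 𝒯, i.e., there is a sentence φ ∈ T with 𝒯_φ = {T}; consequently 𝒯 is the least generating set of Cl_E(𝒯) (every subset 𝒯' ⊆ Cl_E(𝒯) with Cl_E(𝒯') = Cl_E(𝒯) satisfies 𝒯 ⊆ 𝒯'); and (b) Cl_E(𝒯) contains no finitely axiomatizable theory outside 𝒯: if T ∈ Cl_E(𝒯) is finitely axiomatizable then T ∈ 𝒯. -/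
open FirstOrder FirstOrder.Language

universe u v

variable {L : FirstOrder.Language.{u, v}}

/-- For a family `𝒯` of finitely axiomatizable complete theories: (a) every `T ∈ 𝒯` is
isolated in `𝒯` by some sentence, hence `𝒯` is the least generating set of `Cl_E(𝒯)`;
(b) `Cl_E(𝒯)` contains no finitely axiomatizable theory outside `𝒯`. -/
theorem finitely_axiomatizable_least_generating (L : FirstOrder.Language.{u, v})
    [L.IsRelational] (𝒯 : Set (L.Theory))
    (h : ∀ T ∈ 𝒯, T.IsMaximal ∧ FinitelyAxiomatizable T) :
    (∀ T ∈ 𝒯, ∃ φ ∈ T, {S ∈ 𝒯 | φ ∈ S} = {T}) ∧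
    (∀ 𝒯' ⊆ ClE 𝒯, ClE 𝒯' = ClE 𝒯 → 𝒯 ⊆ 𝒯') ∧
    (∀ T ∈ ClE 𝒯, FinitelyAxiomatizable T → T ∈ 𝒯) := by
  have iso : ∀ T ∈ 𝒯, ∃ φ ∈ T, {S ∈ 𝒯 | φ ∈ S} = {T} := by
    intro T hT
    obtain ⟨φ, hφT, hφ⟩ := (h T hT).2
    refine ⟨φ, hφT, ?_⟩
    ext S
    simp only [Set.mem_setOf_eq, Set.mem_singleton_iff]
    constructor
    · rintro ⟨hS, hφS⟩
      exact hφ S (h S hS).1 hφS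
    · rintro rfl
      exact ⟨hT, hφT⟩
  refine ⟨iso, ?_, ?_⟩
  · intro 𝒯' h𝒯' heq T hT
    have hTcl : T ∈ ClE 𝒯' := heq ▸ Set.mem_union_left _ hT
    rcases hTcl with hT' | ⟨_, hinf⟩
    · exact hT'
    · obtain ⟨φ, hφT, hiso⟩ := iso T hT
      exfalso
      have hsub : {S ∈ 𝒯' | φ ∈ S} ⊆ {T} := by
        intro S ⟨hS, hφS⟩
        have hScl : S ∈ ClE 𝒯 := h𝒯' hS
        rcases hScl with hS𝒯 | ⟨_, hSinf⟩
        · have : S ∈ {S ∈ 𝒯 | φ ∈ S} := ⟨hS𝒯, hφS⟩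
          rw [hiso] at this; exact this
        · exfalso
          have := hSinf φ hφS
          rw [hiso] at this
          exact this (Set.finite_singleton T)
      exact (hinf φ hφT) ((Set.finite_singleton T).subset hsub)
  · intro T hTcl hfa
    rcases hTcl with hT | ⟨_, hinf⟩
    · exact hT
    · obtain ⟨φ, hφT, hφ⟩ := hfa
      obtain ⟨S, hS, hφS⟩ := (hinf φ hφT).nonempty
      have := hφ S (h S hS).1 hφS
      rwa [← this]
end

section
/- Let L be a relational language and 𝒯 a set of complete satisfiable L-theories. Then Cl_E(𝒯) contains a theory having no finite models if and only if for every natural number N the set 𝒯 is not contained in 𝒯̄_{fin,≤N}, i.e., for every N there is a theory T ∈ 𝒯 having no model of cardinality ≤ N. -/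
open FirstOrder FirstOrder.Language

universe u v

variable {L : FirstOrder.Language.{u, v}}

section Helpers

variable {L : FirstOrder.Language.{u, v}}

lemma finModel_of_not_cardGe {T : L.Theory} (h : T.IsMaximal) {N : ℕ}
    (hN : Sentence.cardGe L (N + 1) ∉ T) :
    ∃ n, 0 < n ∧ n ≤ N ∧ HasModelCard T n := by
  have hnot : (Sentence.cardGe L (N + 1)).not ∈ T := (h.2 _).resolve_left hN
  obtain ⟨M⟩ := h.1
  have hM : (M : Type (max u v)) ⊨ (Sentence.cardGe L (N + 1)).not :=
    Theory.realize_sentence_of_mem T hnot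
  rw [Sentence.realize_not, Sentence.realize_cardGe, not_le] at hM
  have hlt : Cardinal.mk M < Cardinal.aleph0 := hM.trans (Cardinal.nat_lt_aleph0 _)
  have hfin : Finite M := Cardinal.lt_aleph0_iff_finite.1 hlt
  have hcast : ((Nat.card M : Cardinal)) = Cardinal.mk M :=
    Cardinal.cast_toNat_of_lt_aleph0 hlt
  have hle : Nat.card M < N + 1 := by
    have := hM; rw [← hcast, Nat.cast_lt] at this; exact this
  have hpos : 0 < Nat.card M := Nat.card_pos
  exact ⟨Nat.card M, hpos, by omega, M, M.struc, M.nonempty', rfl, M.is_model⟩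

lemma no_small_model {S : L.Theory} {N : ℕ}
    (hmem : Sentence.cardGe L (N + 1) ∈ S) :
    ∀ n, 0 < n → n ≤ N → ¬HasModelCard S n := by
  rintro n hn hnN ⟨M, SM, hne, hcard, hmod⟩
  have hM : M ⊨ Sentence.cardGe L (N + 1) :=
    @Theory.realize_sentence_of_mem L M SM S hmod _ hmem
  rw [Sentence.realize_cardGe] at hM
  have hfin : Finite M := Nat.finite_of_card_ne_zero (by omega)
  have hlt : Cardinal.mk M < Cardinal.aleph0 := Cardinal.lt_aleph0_of_finite M
  have hcast : ((Nat.card M : Cardinal)) = Cardinal.mk M :=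
    Cardinal.cast_toNat_of_lt_aleph0 hlt
  rw [← hcast, Nat.cast_le, hcard] at hM
  omega

end Helpers

/-- Proposition 4.1: `Cl_E(𝒯)` contains a theory without finite models iff for every natural
`N` the family `𝒯` is not contained in `𝒯̄_{fin,≤N}`, i.e. for every `N` some theory of `𝒯`
has no model of cardinality `≤ N`. -/
theorem prop_4_1 (L : FirstOrder.Language.{u, v}) [L.IsRelational]
    (𝒯 : Set (L.Theory)) (hmax : ∀ T ∈ 𝒯, T.IsMaximal) :
    (∃ T ∈ ClE 𝒯, ¬HasFiniteModel T) ↔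
      ∀ N : ℕ, ∃ T ∈ 𝒯, ∀ n : ℕ, 0 < n → n ≤ N → ¬HasModelCard T n := by
  constructor
  · rintro ⟨T, hT, hTfin⟩ N
    rcases hT with hT | ⟨hTmax, hTinf⟩
    · exact ⟨T, hT, fun n hn _ hcard => hTfin ⟨n, hn, hcard⟩⟩
    · have hcg : Sentence.cardGe L (N + 1) ∈ T := by
        by_contra hc
        obtain ⟨n, hn, _, hcard⟩ := finModel_of_not_cardGe hTmax hc
        exact hTfin ⟨n, hn, hcard⟩
      obtain ⟨S, hS⟩ := (hTinf _ hcg).nonempty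
      exact ⟨S, hS.1, no_small_model hS.2⟩
  · intro h
    by_cases hA : ∃ T ∈ 𝒯, ¬HasFiniteModel T
    · obtain ⟨T, hT, hTf⟩ := hA
      exact ⟨T, Or.inl hT, hTf⟩
    push_neg at hA
    choose f hf𝒯 hfsmall using h
    set U : Ultrafilter ℕ := Filter.hyperfilter ℕ with hU
    set Tstar : L.Theory := {φ | {N | φ ∈ f N} ∈ U} with hTstarDef
    have hmemT : ∀ φ : L.Sentence, φ ∈ Tstar ↔ {N | φ ∈ f N} ∈ U := fun φ => Iff.rfl
    -- satisfiability of Tstar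
    have hsat : Tstar.IsSatisfiable := by
      rw [Theory.isSatisfiable_iff_isFinitelySatisfiable]
      intro T0 hT0
      have hmem : (⋂ φ ∈ T0, {N | φ ∈ f N}) ∈ U :=
        (Filter.biInter_finset_mem T0).2 fun φ hφ => (hmemT φ).1 (hT0 hφ)
      obtain ⟨N, hN⟩ := Ultrafilter.nonempty_of_mem hmem
      refine ((hmax _ (hf𝒯 N)).1).mono fun φ hφ => ?_
      simp only [Set.mem_iInter₂] at hN
      exact hN φ hφ
    -- completeness of Tstar
    have hcompl : ∀ φ : L.Sentence, φ ∈ Tstar ∨ φ.not ∈ Tstar := by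
      intro φ
      rcases em (φ ∈ Tstar) with hφ | hφ
      · exact Or.inl hφ
      · refine Or.inr ?_
        have hc : {N | φ ∈ f N}ᶜ ∈ U := Ultrafilter.compl_mem_iff_notMem.2 hφ
        exact Filter.mem_of_superset hc fun N hN =>
          ((hmax _ (hf𝒯 N)).2 φ).resolve_left hN
    have hTmax : Tstar.IsMaximal := ⟨hsat, hcompl⟩
    -- all cardinality sentences are in Tstar
    have hcg : ∀ n : ℕ, Sentence.cardGe L (n + 1) ∈ Tstar := by
      intro n
      have hsub : {N : ℕ | n ≤ N} ⊆ {N | Sentence.cardGe L (n + 1) ∈ f N} := by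
        intro N hN
        by_contra hc
        obtain ⟨m, hm, hmn, hcard⟩ := finModel_of_not_cardGe (hmax _ (hf𝒯 N)) hc
        exact hfsmall N m hm (le_trans hmn hN) hcard
      exact Filter.mem_of_superset (Nat.hyperfilter_le_atTop (Filter.mem_atTop n)) hsub
    -- Tstar has no finite model
    have hnofin : ¬HasFiniteModel Tstar := by
      rintro ⟨n, hn, hcard⟩
      exact no_small_model (hcg n) n hn le_rfl hcard
    -- each sentence of Tstar is in infinitely many members of 𝒯
    refine ⟨Tstar, Or.inr ⟨hTmax, ?_⟩, hnofin⟩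
    intro φ hφ
    by_contra hcon
    rw [Set.not_infinite] at hcon
    have hAinf : {N | φ ∈ f N}.Infinite := by
      intro hfin
      exact Ultrafilter.compl_mem_iff_notMem.1
        (Filter.compl_mem_hyperfilter_of_finite hfin) ((hmemT φ).1 hφ)
    have hfm : ∀ S ∈ {S ∈ 𝒯 | φ ∈ S}, ∃ m, 0 < m ∧ HasModelCard S m :=
      fun S hS => hA S hS.1
    choose! msz hmsz1 hmsz2 using hfm
    obtain ⟨N0, hN0⟩ := (hcon.image msz).bddAbove
    obtain ⟨N, hNA, hNgt⟩ := hAinf.exists_gt N0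
    have hSin : f N ∈ {S ∈ 𝒯 | φ ∈ S} := ⟨hf𝒯 N, hNA⟩
    have hle : msz (f N) ≤ N0 := hN0 (Set.mem_image_of_mem msz hSin)
    exact hfsmall N (msz (f N)) (hmsz1 _ hSin) (by omega) (hmsz2 _ hSin)
end

section
/- Let L be a relational language and 𝒯 a set of complete satisfiable L-theories. If every theory in 𝒯 has an n-element model (for a fixed n ≥ 1), then every theory in Cl_E(𝒯) has an n-element model; likewise, if every theory in 𝒯 has a finite model of cardinality at most N, then every theory in Cl_E(𝒯) has a finite model of cardinality at most N. -/
open FirstOrder FirstOrder.Language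

universe u v

variable {L : FirstOrder.Language.{u, v}}

section Aux

variable {L : FirstOrder.Language.{u, v}}

open Cardinal

/-- A sentence realized in some model of a maximal theory lies in the theory. -/
lemma memOfModel (S : L.Theory) (hS : S.IsMaximal)
    (M : Type (max u v)) (str : L.Structure M)
    (hM : @FirstOrder.Language.Theory.Model L M str S)
    (φ : L.Sentence) (hφ : @FirstOrder.Language.Sentence.Realize L M str φ) : φ ∈ S := by
  letI := str
  haveI := hM
  rcases hS.mem_or_not_mem φ with h | h
  · exact h
  · exfalso
    have h2 : M ⊨ φ.not := S.realize_sentence_of_mem h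
    rw [FirstOrder.Language.Sentence.realize_not] at h2
    exact h2 hφ

/-- If every theory of `𝒯` contains `φ` and every theory of `𝒯` is maximal, then
every theory of `ClE 𝒯` contains `φ`. -/
lemma mem_of_forall_mem (𝒯 : Set (L.Theory)) (hmax : ∀ T ∈ 𝒯, T.IsMaximal)
    (φ : L.Sentence) (hφ : ∀ S ∈ 𝒯, φ ∈ S) (T : L.Theory) (hT : T ∈ ClE 𝒯)
    (hTmax : T.IsMaximal) : φ ∈ T := by
  have contra : ∀ S ∈ 𝒯, φ.not ∈ S → False := by
    intro S hS𝒯 hSn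
    obtain ⟨M⟩ := (hmax S hS𝒯).1
    have h1 : (M : Type (max u v)) ⊨ φ := S.realize_sentence_of_mem (hφ S hS𝒯)
    have h2 : (M : Type (max u v)) ⊨ φ.not := S.realize_sentence_of_mem hSn
    rw [FirstOrder.Language.Sentence.realize_not] at h2
    exact h2 h1
  rcases hTmax.mem_or_not_mem φ with h | h
  · exact h
  · exfalso
    rcases hT with hT𝒯 | ⟨-, hinf⟩
    · exact contra T hT𝒯 h
    · obtain ⟨S, hS𝒯, hSn⟩ := (hinf φ.not h).nonempty
      exact contra S hS𝒯 hSn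

lemma natCast_card_eq {M : Type*} (hfin : Finite M) : (Nat.card M : Cardinal) = #M := by
  haveI := Fintype.ofFinite M
  rw [Nat.card_eq_fintype_card, Cardinal.mk_fintype]

/-- A maximal theory with a model of cardinality `n` contains `cardGe m` for `m ≤ n`. -/
lemma cardGe_mem (S : L.Theory) (hS : S.IsMaximal) {n m : ℕ}
    (h : HasModelCard S n) (hn : 0 < n) (hmn : m ≤ n) :
    FirstOrder.Language.Sentence.cardGe L m ∈ S := by
  obtain ⟨M, str, hne, hcard, hmod⟩ := h
  refine memOfModel S hS M str hmod _ ?_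
  letI := str
  rw [FirstOrder.Language.Sentence.realize_cardGe]
  have hfin : Finite M := by
    rcases finite_or_infinite M with h | h
    · exact h
    · rw [Nat.card_eq_zero_of_infinite] at hcard; omega
  rw [← natCast_card_eq hfin, hcard, Nat.cast_le]
  exact hmn

/-- A maximal theory with a model of cardinality `n` contains `(cardGe m).not` for `n < m`. -/
lemma not_cardGe_mem (S : L.Theory) (hS : S.IsMaximal) {n m : ℕ}
    (h : HasModelCard S n) (hn : 0 < n) (hmn : n < m) :
    (FirstOrder.Language.Sentence.cardGe L m).not ∈ S := by
  obtain ⟨M, str, hne, hcard, hmod⟩ := h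
  refine memOfModel S hS M str hmod _ ?_
  letI := str
  rw [FirstOrder.Language.Sentence.realize_not, FirstOrder.Language.Sentence.realize_cardGe]
  intro hle
  have hfin : Finite M := by
    rcases finite_or_infinite M with h | h
    · exact h
    · rw [Nat.card_eq_zero_of_infinite] at hcard; omega
  rw [← natCast_card_eq hfin, hcard, Nat.cast_le] at hle
  omega

end Aux

/-- Proposition 4.2 (first part): if every theory of `𝒯` has an `n`-element model then so does
every theory of `Cl_E(𝒯)`; if every theory of `𝒯` has a finite model of cardinality at most
`N` then so does every theory of `Cl_E(𝒯)`. -/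
theorem prop_4_2 (L : FirstOrder.Language.{u, v}) [L.IsRelational]
    (𝒯 : Set (L.Theory)) (hmax : ∀ T ∈ 𝒯, T.IsMaximal) :
    (∀ n : ℕ, 1 ≤ n → (∀ T ∈ 𝒯, HasModelCard T n) → ∀ T ∈ ClE 𝒯, HasModelCard T n) ∧
    (∀ N : ℕ, (∀ T ∈ 𝒯, ∃ n : ℕ, 0 < n ∧ n ≤ N ∧ HasModelCard T n) →
      ∀ T ∈ ClE 𝒯, ∃ n : ℕ, 0 < n ∧ n ≤ N ∧ HasModelCard T n) := by
  have maxOfClE : ∀ T ∈ ClE 𝒯, T.IsMaximal := by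
    rintro T (hT | ⟨hTm, -⟩)
    · exact hmax T hT
    · exact hTm
  constructor
  · intro n hn hall T hT
    have hTmax := maxOfClE T hT
    have h1 : FirstOrder.Language.Sentence.cardGe L n ∈ T :=
      mem_of_forall_mem 𝒯 hmax _ (fun S hS => cardGe_mem S (hmax S hS) (hall S hS)
        (by omega) le_rfl) T hT hTmax
    have h2 : (FirstOrder.Language.Sentence.cardGe L (n + 1)).not ∈ T :=
      mem_of_forall_mem 𝒯 hmax _ (fun S hS => not_cardGe_mem S (hmax S hS) (hall S hS)
        (by omega) (Nat.lt_succ_self n)) T hT hTmax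
    obtain ⟨M⟩ := hTmax.1
    refine ⟨M, M.struc, M.nonempty', ?_, M.is_model⟩
    have r1 : (M : Type (max u v)) ⊨ FirstOrder.Language.Sentence.cardGe L n :=
      T.realize_sentence_of_mem h1
    have r2 : (M : Type (max u v)) ⊨ (FirstOrder.Language.Sentence.cardGe L (n + 1)).not :=
      T.realize_sentence_of_mem h2
    rw [FirstOrder.Language.Sentence.realize_cardGe] at r1
    rw [FirstOrder.Language.Sentence.realize_not,
      FirstOrder.Language.Sentence.realize_cardGe, not_le] at r2
    have hfin : Finite (M : Type (max u v)) :=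
      Cardinal.lt_aleph0_iff_finite.mp (lt_of_lt_of_le r2 (Cardinal.nat_lt_aleph0 (n + 1)).le)
    rw [← natCast_card_eq hfin, Nat.cast_le] at r1
    rw [← natCast_card_eq hfin, Nat.cast_lt] at r2
    omega
  · intro N hall T hT
    have hTmax := maxOfClE T hT
    have h1 : FirstOrder.Language.Sentence.cardGe L 1 ∈ T := by
      refine mem_of_forall_mem 𝒯 hmax _ (fun S hS => ?_) T hT hTmax
      obtain ⟨n, hn, _, hmc⟩ := hall S hS
      exact cardGe_mem S (hmax S hS) hmc hn hn
    have h2 : (FirstOrder.Language.Sentence.cardGe L (N + 1)).not ∈ T := by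
      refine mem_of_forall_mem 𝒯 hmax _ (fun S hS => ?_) T hT hTmax
      obtain ⟨n, hn, hnN, hmc⟩ := hall S hS
      exact not_cardGe_mem S (hmax S hS) hmc hn (by omega)
    obtain ⟨M⟩ := hTmax.1
    have r1 : (M : Type (max u v)) ⊨ FirstOrder.Language.Sentence.cardGe L 1 :=
      T.realize_sentence_of_mem h1
    have r2 : (M : Type (max u v)) ⊨ (FirstOrder.Language.Sentence.cardGe L (N + 1)).not :=
      T.realize_sentence_of_mem h2
    rw [FirstOrder.Language.Sentence.realize_cardGe] at r1
    rw [FirstOrder.Language.Sentence.realize_not,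
      FirstOrder.Language.Sentence.realize_cardGe, not_le] at r2
    have hfin : Finite (M : Type (max u v)) :=
      Cardinal.lt_aleph0_iff_finite.mp (lt_of_lt_of_le r2 (Cardinal.nat_lt_aleph0 (N + 1)).le)
    rw [← natCast_card_eq hfin, Nat.cast_le] at r1
    rw [← natCast_card_eq hfin, Nat.cast_lt] at r2
    exact ⟨Nat.card (M : Type (max u v)), by omega, by omega,
      M, M.struc, M.nonempty', rfl, M.is_model⟩
end

section
/- Every complete theory of a finite structure in a relational language is an almost language uniform (ALU) theory. Precisely: let L be a relational language, M a finite L-structure, and T = Th(M). Then for each arity n there is a partition of the n-ary relation symbols of L into finitely many classes such that every arity-preserving bijection σ of the relation symbols of L that maps each partition class (for every arity) onto itself preserves T: for every L-sentence φ, φ ∈ T if and only if σ(φ) ∈ T, where σ(φ) is obtained from φ by replacing each relation symbol R with σ(R). -/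
open FirstOrder FirstOrder.Language

universe u v

variable {L : FirstOrder.Language.{u, v}}

/-- Proposition 5.1: the complete theory of a finite structure in a relational language is an
ALU-theory: for each arity there is a partition of the relation symbols of that arity into
finitely many classes (given by the fibers of `c n`) such that every arity-preserving bijection
of the relation symbols preserving the classes preserves the theory. -/
theorem finite_structure_theory_ALU (L : FirstOrder.Language.{u, v}) [L.IsRelational]
    (M : Type (max u v)) [L.Structure M] [Nonempty M] [Finite M] :
    ∃ c : ∀ n : ℕ, L.Relations n → ℕ,
      (∀ n : ℕ, (Set.range (c n)).Finite) ∧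
      ∀ e : L ≃ᴸ L,
        (∀ (n : ℕ) (R : L.Relations n), c n (e.toLHom.onRelation R) = c n R) →
        ∀ φ : L.Sentence,
          φ ∈ L.completeTheory M ↔ e.toLHom.onSentence φ ∈ L.completeTheory M := by
  classical
  have henc : ∀ n : ℕ, ∃ g : Set (Fin n → M) → ℕ, Function.Injective g := by
    intro n
    obtain ⟨g, hg⟩ := Countable.exists_injective_nat (Set (Fin n → M))
    exact ⟨g, hg⟩
  choose g hg using henc
  refine ⟨fun n R => g n {x | Structure.RelMap R x}, fun n => ?_, ?_⟩
  · exact (Set.finite_range (g n)).subset (Set.range_comp_subset_range _ _)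
  · intro e he φ
    have hrel : ∀ (n : ℕ) (R : L.Relations n) (x : Fin n → M),
        Structure.RelMap (e.toLHom.onRelation R) x = Structure.RelMap R x := by
      intro n R x
      have h1 := hg n (he n R)
      have h2 : {x | Structure.RelMap (e.toLHom.onRelation R) x} =
          {x | Structure.RelMap R x} := h1
      simp only [Set.ext_iff, Set.mem_setOf_eq] at h2
      exact propext (h2 x)
    haveI : e.toLHom.IsExpansionOn M :=
      ⟨fun {n} f => isEmptyElim f, fun {n} R x => hrel n R x⟩
    simp only [completeTheory, Set.mem_setOf_eq, LHom.realize_onSentence]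
end
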